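/- Let 1 ≤ k ≤ m and y ∈ ℝ^m, and let (k0, k1) be the index pair of y associated with k. Then for every d ∈ ℝ^m, the one-sided directional derivative of the top-k-sum operator satisfies T_k'(y; d) = Σ_{i : y_i > y_(k)} d_i + T_{k−k0}( (d_i)_{i : y_i = y_(k)} ), i.e., it equals the sum of d over the indices whose y-value strictly exceeds the k-th largest value y_(k), plus the sum of the k−k0 largest entries of d restricted to the indices where y equals y_(k). -/

import Mathlib

open Filter Topology Matrix

noncomputable def topkSum {ι : Type*} [Fintype ι] (k : ℕ) (x : ι → ℝ) : ℝ :=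
  sSup {v : ℝ | ∃ s : Finset ι, s.card = k ∧ v = ∑ i ∈ s, x i}

def Bk (m k : ℕ) : Set (Fin m → ℝ) := {x | topkSum k x ≤ 0}

noncomputable def sortDesc {m : ℕ} (x : Fin m → ℝ) : Fin m → ℝ :=
  fun i => (x ∘ Tuple.sort x) i.rev

noncomputable def ent {m : ℕ} (x : Fin m → ℝ) (i : ℕ) : ℝ :=
  if h : 1 ≤ i ∧ i ≤ m then x ⟨i - 1, by omega⟩ else 0

noncomputable def entE {m : ℕ} (x : Fin m → ℝ) (i : ℕ) : EReal :=
  if h : 1 ≤ i ∧ i ≤ m then ((x ⟨i - 1, by omega⟩ : ℝ) : EReal)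
  else if i = 0 then ⊤ else ⊥

def IsIndexPairOf {m : ℕ} (k : ℕ) (x : Fin m → ℝ) (k0 k1 : ℕ) : Prop :=
  k0 + 1 ≤ k ∧ k ≤ k1 ∧ k1 ≤ m ∧
  entE x (k0 + 1) < entE x k0 ∧
  (∀ i : ℕ, k0 + 1 ≤ i → i ≤ k1 → entE x i = entE x k) ∧
  entE x (k1 + 1) < entE x k1

def IsEProjOn {m : ℕ} (S : Set (Fin m → ℝ)) (y p : Fin m → ℝ) : Prop :=
  p ∈ S ∧ ∀ z ∈ S, ∑ i, (y i - p i) ^ 2 ≤ ∑ i, (y i - z i) ^ 2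

def ProjKKT {m : ℕ} (k : ℕ) (y ybar μ : Fin m → ℝ) (lam θ : ℝ) (k0 k1 : ℕ) : Prop :=
  IsIndexPairOf k ybar k0 k1 ∧
  (∀ i : Fin m, (i : ℕ) < k0 → ybar i = y i - lam ∧ μ i = 1) ∧
  (∀ i : Fin m, k0 ≤ (i : ℕ) → (i : ℕ) < k1 →
      ybar i = y i - lam * μ i ∧ ybar i = θ ∧ 0 ≤ μ i ∧ μ i ≤ 1) ∧
  (∑ i : Fin m, (if k0 ≤ (i : ℕ) ∧ (i : ℕ) < k1 then μ i else 0)) = (k : ℝ) - (k0 : ℝ) ∧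
  (∀ i : Fin m, k1 ≤ (i : ℕ) → ybar i = y i ∧ μ i = 0) ∧
  (∑ i : Fin m, (if (i : ℕ) < k0 then y i else 0)) - (k0 : ℝ) * lam + ((k : ℝ) - (k0 : ℝ)) * θ = 0 ∧
  0 < lam ∧
  (θ : EReal) < entE ybar k0 ∧ entE ybar (k1 + 1) < (θ : EReal)

noncomputable def cvar {m : ℕ} (τ : ℝ) (g : Fin m → ℝ) : ℝ :=
  ⨅ t : ℝ, t + (1 / ((1 - τ) * m)) * ∑ j, max (g j - t) 0

/-! Let `r` be the `k`-th largest entry of `y`, `A = {i | r < y i}` and `E = {i | y i = r}`.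
Every `s` satisfies `∑_{i ∈ s} (y i - r) ≤ ∑_{i ∈ A} (y i - r)`, with equality iff
`A ⊆ s ⊆ A ∪ E`; so the `k`-subsets maximizing `∑ y` are the sets `A ∪ s'` with `s' ⊆ E`,
`#s' = k - #A`. As a maximum of finitely many affine functions of `t`, `T_k (y + t • d)` is,
for small `t ≥ 0`, decided among these maximizers alone, and among them the slope
`∑_A d + ∑_{s'} d` is largest when `s'` carries the top `k - #A` entries of `d` on `E`.
Hence `T_k (y + t • d)` is affine in `t` near `0⁺`. -/

open Finset

section TopkSum

variable {ι : Type*} [Fintype ι]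

theorem finite_setOf_sum_card_eq (k : ℕ) (x : ι → ℝ) :
    {v : ℝ | ∃ s : Finset ι, #s = k ∧ v = ∑ i ∈ s, x i}.Finite :=
  (Set.finite_range fun s : Finset ι => ∑ i ∈ s, x i).subset
    fun _ ⟨s, _, hv⟩ => ⟨s, hv.symm⟩

theorem sum_le_topkSum (s : Finset ι) (x : ι → ℝ) : ∑ i ∈ s, x i ≤ topkSum #s x :=
  le_csSup (finite_setOf_sum_card_eq _ x).bddAbove ⟨s, rfl, rfl⟩

theorem exists_sum_eq_topkSum {k : ℕ} (hk : k ≤ Fintype.card ι) (x : ι → ℝ) :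
    ∃ s : Finset ι, #s = k ∧ ∑ i ∈ s, x i = topkSum k x := by
  obtain ⟨s, -, hs⟩ := exists_subset_card_eq (s := (univ : Finset ι)) hk
  have hne : {v : ℝ | ∃ s : Finset ι, #s = k ∧ v = ∑ i ∈ s, x i}.Nonempty := ⟨_, s, hs, rfl⟩
  obtain ⟨t, ht, hsum⟩ := hne.csSup_mem (finite_setOf_sum_card_eq k x)
  exact ⟨t, ht, hsum.symm⟩

theorem topkSum_eq_of_forall_sum_le {k : ℕ} {x : ι → ℝ} {v : ℝ}
    (hle : ∀ s : Finset ι, #s = k → ∑ i ∈ s, x i ≤ v)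
    (hmem : ∃ s : Finset ι, #s = k ∧ ∑ i ∈ s, x i = v) : topkSum k x = v := by
  obtain ⟨s, hs, hsum⟩ := hmem
  exact IsGreatest.csSup_eq ⟨⟨s, hs, hsum.symm⟩, by rintro _ ⟨t, ht, rfl⟩; exact hle t ht⟩

variable {p : ι → Prop} [DecidablePred p]

theorem sum_le_topkSum_subtype {s : Finset ι} (hs : ∀ i ∈ s, p i) (x : ι → ℝ) :
    ∑ i ∈ s, x i ≤ topkSum #s (fun i : {i // p i} => x i) := by
  have h := sum_le_topkSum (s.subtype p) (fun i => x i)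
  rwa [sum_subtype_of_mem x hs, card_subtype, filter_true_of_mem hs] at h

theorem exists_sum_eq_topkSum_subtype {k : ℕ} (hk : k ≤ #{i | p i}) (x : ι → ℝ) :
    ∃ s : Finset ι, (∀ i ∈ s, p i) ∧ #s = k ∧
      ∑ i ∈ s, x i = topkSum k (fun i : {i // p i} => x i) := by
  obtain ⟨t, ht, hsum⟩ := exists_sum_eq_topkSum (ι := {i // p i}) (k := k)
    (by rwa [Fintype.card_subtype]) (fun i => x i)
  refine ⟨t.map (Function.Embedding.subtype p), ?_, by rw [card_map, ht], ?_⟩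
  · intro _ hi
    obtain ⟨i, -, rfl⟩ := mem_map.1 hi
    exact i.2
  · rw [sum_map, ← hsum]
    rfl

end TopkSum

theorem eventually_add_mul_le_add_mul {a b M L : ℝ} (ha : a ≤ M) (hb : a = M → b ≤ L) :
    ∀ᶠ t in 𝓝[≥] (0 : ℝ), a + t * b ≤ M + t * L := by
  rcases ha.lt_or_eq with hlt | rfl
  · have hcont : ∀ᶠ t in 𝓝 (0 : ℝ), a + t * b < M + t * L :=
      ContinuousAt.eventually_lt (by fun_prop) (by fun_prop) (by simpa using hlt)
    exact (hcont.filter_mono nhdsWithin_le_nhds).mono fun _ => le_of_lt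
  · filter_upwards [self_mem_nhdsWithin] with t (ht : 0 ≤ t)
    gcongr
    exact hb rfl

section Threshold

variable {ι : Type*} [Fintype ι] (y d : ι → ℝ) (r : ℝ)

theorem sum_posPart_sub_eq_sum_filter_lt :
    ∑ i, (y i - r)⁺ = ∑ i ∈ {i | r < y i}, (y i - r) := by
  rw [sum_filter]
  refine sum_congr rfl fun i _ => ?_
  split_ifs with h
  · exact posPart_eq_self.2 (sub_nonneg.2 h.le)
  · exact posPart_eq_zero.2 (sub_nonpos.2 (not_lt.1 h))

theorem sum_sub_le_sum_filter_lt (s : Finset ι) :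
    ∑ i ∈ s, (y i - r) ≤ ∑ i ∈ {i | r < y i}, (y i - r) :=
  calc ∑ i ∈ s, (y i - r) ≤ ∑ i ∈ s, (y i - r)⁺ := sum_le_sum fun _ _ => le_posPart _
    _ ≤ ∑ i, (y i - r)⁺ :=
      sum_le_sum_of_subset_of_nonneg (subset_univ s) fun _ _ _ => posPart_nonneg _
    _ = _ := sum_posPart_sub_eq_sum_filter_lt y r

theorem sum_sub_eq_sum_filter_lt_iff [DecidableEq ι] (s : Finset ι) :
    ∑ i ∈ s, (y i - r) = ∑ i ∈ {i | r < y i}, (y i - r) ↔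
      ({i | r < y i} : Finset ι) ⊆ s ∧ ∀ i ∈ s, r ≤ y i := by
  constructor
  · intro h
    rw [← sum_posPart_sub_eq_sum_filter_lt, ← sum_sdiff (subset_univ s)] at h
    have hle : ∑ i ∈ s, (y i - r) ≤ ∑ i ∈ s, (y i - r)⁺ := sum_le_sum fun _ _ => le_posPart _
    have hout : ∑ i ∈ univ \ s, (y i - r)⁺ = 0 :=
      le_antisymm (by linarith) (sum_nonneg fun _ _ => posPart_nonneg _)
    have hin : ∑ i ∈ s, (y i - r) = ∑ i ∈ s, (y i - r)⁺ :=
      le_antisymm hle (by linarith)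
    refine ⟨fun i hi => ?_, fun i hi => ?_⟩
    · by_contra his
      have hi0 := (sum_eq_zero_iff_of_nonneg fun _ _ => posPart_nonneg _).1 hout i
        (mem_sdiff.2 ⟨mem_univ i, his⟩)
      rw [posPart_eq_zero, sub_nonpos] at hi0
      exact (mem_filter.1 hi).2.not_ge hi0
    · have hi0 := (sum_eq_sum_iff_of_le fun i _ => le_posPart (y i - r)).1 hin i hi
      linarith [posPart_nonneg (y i - r)]
  · rintro ⟨hA, hs⟩
    rw [← sum_sdiff hA, add_eq_right]
    refine sum_eq_zero fun i hi => ?_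
    obtain ⟨his, hiA⟩ := mem_sdiff.1 hi
    have hle : y i ≤ r := not_lt.1 fun h => hiA (mem_filter.2 ⟨mem_univ i, h⟩)
    linarith [hs i his]

theorem card_filter_le_eq_add [DecidableEq ι] :
    #{i | r ≤ y i} = #{i | r < y i} + #{i | y i = r} := by
  rw [← card_union_of_disjoint (disjoint_filter.2 fun i _ h h' => h.ne' h')]
  congr 1
  ext i
  simp [le_iff_lt_or_eq, eq_comm]

theorem sum_le_sum_filter_lt_add_topkSum [DecidableEq ι] {s : Finset ι}
    (hA : ({i | r < y i} : Finset ι) ⊆ s) (hs : ∀ i ∈ s, r ≤ y i) :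
    ∑ i ∈ s, d i ≤ ∑ i ∈ {i | r < y i}, d i +
      topkSum (#s - #{i | r < y i}) (fun i : {i // y i = r} => d i) := by
  rw [← sum_sdiff hA, ← card_sdiff_of_subset hA, add_comm]
  gcongr
  refine sum_le_topkSum_subtype (fun i hi => ?_) d
  obtain ⟨his, hiA⟩ := mem_sdiff.1 hi
  exact le_antisymm (not_lt.1 fun h => hiA (mem_filter.2 ⟨mem_univ i, h⟩)) (hs i his)

theorem eventually_topkSum_add_smul_eq [DecidableEq ι] {k : ℕ} (hA : #{i | r < y i} ≤ k)
    (hk : k ≤ #{i | r ≤ y i}) :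
    ∀ᶠ t in 𝓝[≥] (0 : ℝ), topkSum k (y + t • d) =
      (∑ i ∈ {i | r < y i}, (y i - r) + k * r) +
        t * (∑ i ∈ {i | r < y i}, d i +
          topkSum (k - #{i | r < y i}) (fun i : {i // y i = r} => d i)) := by
  have hE := card_filter_le_eq_add y r
  set A : Finset ι := {i | r < y i}
  have hsum_y : ∀ s : Finset ι, #s = k → ∑ i ∈ s, y i = ∑ i ∈ s, (y i - r) + k * r := by
    intro s hs
    simp [sum_sub_distrib, hs]
  have hsum_yd : ∀ (s : Finset ι) (t : ℝ),
      ∑ i ∈ s, (y + t • d) i = ∑ i ∈ s, y i + t * ∑ i ∈ s, d i := by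
    intro s t
    simp [sum_add_distrib, mul_sum]
  have hle : ∀ s : Finset ι, #s = k → ∀ᶠ t in 𝓝[≥] (0 : ℝ), ∑ i ∈ s, (y + t • d) i ≤
      (∑ i ∈ A, (y i - r) + k * r) +
        t * (∑ i ∈ A, d i + topkSum (k - #A) (fun i : {i // y i = r} => d i)) := by
    intro s hs
    simp only [hsum_yd, hsum_y s hs]
    refine eventually_add_mul_le_add_mul ?_ fun heq => ?_
    · exact add_le_add_left (sum_sub_le_sum_filter_lt y r s) _
    · rw [add_left_inj, sum_sub_eq_sum_filter_lt_iff] at heq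
      rw [← hs]
      exact sum_le_sum_filter_lt_add_topkSum y d r heq.1 heq.2
  obtain ⟨s, hsE, hs, hsum_d⟩ := exists_sum_eq_topkSum_subtype (p := fun i => y i = r)
    (k := k - #A) (by omega) d
  have hdisj : Disjoint A s :=
    disjoint_left.2 fun i hiA his => (mem_filter.1 hiA).2.ne' (hsE i his)
  have hcard : #(A ∪ s) = k := by rw [card_union_of_disjoint hdisj, hs]; omega
  have hmax : ∑ i ∈ A ∪ s, (y i - r) = ∑ i ∈ A, (y i - r) := by
    refine (sum_sub_eq_sum_filter_lt_iff y r _).2 ⟨subset_union_left, fun i hi => ?_⟩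
    rcases mem_union.1 hi with hi | hi
    · exact (mem_filter.1 hi).2.le
    · exact (hsE i hi).ge
  filter_upwards [eventually_all.2 fun s => eventually_imp_distrib_left.2 (hle s)] with t ht
  refine topkSum_eq_of_forall_sum_le ht ⟨A ∪ s, hcard, ?_⟩
  rw [hsum_yd, hsum_y _ hcard, hmax, sum_union hdisj, hsum_d]

theorem tendsto_topkSum_slope [DecidableEq ι] {k : ℕ} (hA : #{i | r < y i} ≤ k)
    (hk : k ≤ #{i | r ≤ y i}) :
    Tendsto (fun t : ℝ => (topkSum k (y + t • d) - topkSum k y) / t) (𝓝[>] 0)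
      (𝓝 (∑ i ∈ {i | r < y i}, d i +
        topkSum (k - #{i | r < y i}) (fun i : {i // y i = r} => d i))) := by
  have h := eventually_topkSum_add_smul_eq y d r hA hk
  have h0 := h.self_of_nhdsWithin Set.self_mem_Ici
  rw [zero_smul, add_zero, zero_mul, add_zero] at h0
  refine tendsto_const_nhds.congr' ?_
  filter_upwards [h.filter_mono (nhdsWithin_mono _ Set.Ioi_subset_Ici_self), self_mem_nhdsWithin]
    with t ht (htpos : 0 < t)
  rw [ht, h0]
  field_simp
  ring

end Threshold

section Sorted

variable {m : ℕ}

theorem sortDesc_antitone (x : Fin m → ℝ) : Antitone (sortDesc x) :=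
  fun _ _ hij => Tuple.monotone_sort x (Fin.rev_le_rev.2 hij)

theorem card_filter_sortDesc (x : Fin m → ℝ) (p : ℝ → Prop) [DecidablePred p] :
    #{i | p (sortDesc x i)} = #{i | p (x i)} :=
  card_equiv (Fin.revPerm.trans (Tuple.sort x)) fun i => by
    rw [mem_filter, mem_filter]
    simp [sortDesc]

theorem ent_of_mem (x : Fin m → ℝ) {i : ℕ} (hi : 1 ≤ i ∧ i ≤ m) :
    ent x i = x ⟨i - 1, by omega⟩ :=
  dif_pos hi

theorem entE_of_mem (x : Fin m → ℝ) {i : ℕ} (hi : 1 ≤ i ∧ i ≤ m) : entE x i = ent x i := by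
  rw [entE, dif_pos hi, ent_of_mem x hi]

theorem le_card_filter_ent_le {x : Fin m → ℝ} (hx : Antitone x) {k : ℕ} (hk : 1 ≤ k ∧ k ≤ m) :
    k ≤ #{i | ent x k ≤ x i} := by
  have hsub : Iic (⟨k - 1, by omega⟩ : Fin m) ⊆ ({i | ent x k ≤ x i} : Finset (Fin m)) :=
    fun i hi => by
      rw [mem_filter, ent_of_mem x hk]
      exact ⟨mem_univ i, hx (mem_Iic.1 hi)⟩
  have := card_le_card hsub
  rw [Fin.card_Iic, Fin.val_mk] at this
  omega

theorem IsIndexPairOf.card_filter_ent_lt {x : Fin m → ℝ} (hx : Antitone x) {k k0 k1 : ℕ}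
    (h : IsIndexPairOf k x k0 k1) : #{i | ent x k < x i} = k0 := by
  obtain ⟨hk0, hkk1, hk1m, hgap, hflat, -⟩ := h
  have hr : ent x k = x ⟨k0, by omega⟩ := by
    have hk0k := hflat (k0 + 1) le_rfl (by omega)
    rw [entE_of_mem x (by omega), entE_of_mem x (by omega), EReal.coe_eq_coe_iff,
      ent_of_mem x (by omega)] at hk0k
    exact hk0k.symm
  have hfilter : ({i | ent x k < x i} : Finset (Fin m)) = Iio ⟨k0, by omega⟩ := by
    ext i
    rw [mem_filter, mem_Iio, hr]
    refine ⟨fun hi => lt_of_not_ge fun hle => (hx hle).not_gt hi.2, fun hi => ⟨mem_univ i, ?_⟩⟩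
    have hik0 : (i : ℕ) < k0 := hi
    rw [entE_of_mem x (by omega), entE_of_mem x (by omega), EReal.coe_lt_coe_iff,
      ent_of_mem x (by omega), ent_of_mem x (by omega)] at hgap
    refine (lt_of_eq_of_lt (by congr 1) hgap).trans_le (hx ?_)
    show (i : ℕ) ≤ k0 - 1
    omega
  rw [hfilter, Fin.card_Iio]

end Sorted

theorem topkSum_dirDeriv_general
    (m k : ℕ)
    (y : Fin m → ℝ) (k0 k1 : ℕ)
    (hpair : IsIndexPairOf k (sortDesc y) k0 k1) :
    ∀ d : Fin m → ℝ,
      Tendsto (fun t : ℝ => (topkSum k (y + t • d) - topkSum k y) / t)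
        (𝓝[>] (0 : ℝ))
        (𝓝 ((∑ i ∈ Finset.univ.filter (fun i : Fin m => ent (sortDesc y) k < y i), d i) +
          topkSum (k - k0) (fun i : {i : Fin m // y i = ent (sortDesc y) k} => d i))) := by
  intro d
  obtain ⟨hk0k, hkk1, hk1m, -⟩ := id hpair
  set r := ent (sortDesc y) k
  have hA : #{i | r < y i} = k0 :=
    (card_filter_sortDesc y (r < ·)).symm.trans (hpair.card_filter_ent_lt (sortDesc_antitone y))
  have hk : k ≤ #{i | r ≤ y i} :=
    (le_card_filter_ent_le (sortDesc_antitone y) (by omega)).trans_eq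
      (card_filter_sortDesc y (r ≤ ·))
  have h := tendsto_topkSum_slope y d r (by omega) hk
  rwa [hA] at h

/-- directional derivative of the top-k-sum operator.  With `(k0, k1)` the
index pair of `y` associated with `k` and `y_(k)` the k-th largest entry of `y`,
`T_k'(y; d) = Σ_{i : y_i > y_(k)} d_i + T_{k-k0}((d_i)_{i : y_i = y_(k)})`. -/
theorem topkSum_dirDeriv
    (m k : ℕ) (hk1 : 1 ≤ k) (hkm : k ≤ m)
    (y : Fin m → ℝ) (k0 k1 : ℕ)
    (hpair : IsIndexPairOf k (sortDesc y) k0 k1) :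
    ∀ d : Fin m → ℝ,
      Tendsto (fun t : ℝ => (topkSum k (y + t • d) - topkSum k y) / t)
        (𝓝[>] (0 : ℝ))
        (𝓝 ((∑ i ∈ Finset.univ.filter (fun i : Fin m => ent (sortDesc y) k < y i), d i) +
          topkSum (k - k0) (fun i : {i : Fin m // y i = ent (sortDesc y) k} => d i))) :=
  topkSum_dirDeriv_general m k y k0 k1 hpair
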